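/- arXiv:2011.10501 — 8 statements merged into one kernel-verified Lean document; each statement's English description precedes it below -/
import Mathlib

section
/- The rectangle X = [0, N♯] × [0, W♯], where N♯ = (ρ_N − α_N)/β_N and W♯ = (ρ_W − α_W)/β_W, is forward invariant for the Wolbachia system: any solution with initial condition in X remains in X for all t ≥ 0. -/
/-!
Since `W' = g W` with `g` continuous, `W = W 0 · exp ∫ g` keeps the sign of `W 0`:
either `W ≡ 0` or `W > 0`. If `W ≡ 0`, the equation for `N` is logistic and `N` keeps its
sign in the same way. If `W > 0`, then `W ≥ m > 0` on `[0, t]`, so while `-m < N ≤ 0` the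
singular term `ρ_N N² / (N + W)` is nonnegative and `N` cannot decrease through `0`. Once both
populations are nonnegative, the field points inward on the edges `N = N♯` and `W = W♯`.
Every crossing is excluded by one barrier principle: a function that starts `≤ 0` and has
derivative `≤ 0` wherever it is slightly positive stays `≤ 0`.
-/

open Set

theorem eq_mul_exp_integral_of_hasDerivAt {u g : ℝ → ℝ} (hg : Continuous g)
    (hu : ∀ t, HasDerivAt u (g t * u t) t) (t : ℝ) :
    u t = u 0 * Real.exp (∫ s in (0 : ℝ)..t, g s) := by
  set G : ℝ → ℝ := fun t => ∫ s in (0 : ℝ)..t, g s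
  have hG : ∀ t, HasDerivAt G (g t) t := fun t => (hg.integral_hasStrictDerivAt 0 t).hasDerivAt
  have hv : ∀ t, HasDerivAt (fun t => u t * Real.exp (-G t)) 0 t := fun t =>
    ((hu t).mul (hG t).neg.exp).congr_deriv (by ring)
  have hconst := is_const_of_deriv_eq_zero (fun t => (hv t).differentiableAt)
    (fun t => (hv t).deriv) t 0
  simp only [G, intervalIntegral.integral_same, neg_zero, Real.exp_zero, mul_one] at hconst
  rw [← hconst, mul_assoc, ← Real.exp_add, neg_add_cancel, Real.exp_zero, mul_one]

theorem nonpos_of_deriv_nonpos_of_pos_of_lt {f f' : ℝ → ℝ} {a b δ : ℝ} (hδ : 0 < δ)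
    (hf : ContinuousOn f (Icc a b)) (hf' : ∀ x ∈ Ico a b, HasDerivWithinAt f (f' x) (Ici x) x)
    (ha : f a ≤ 0) (bound : ∀ x ∈ Ico a b, 0 < f x → f x < δ → f' x ≤ 0) :
    ∀ x ∈ Icc a b, f x ≤ 0 := by
  intro x hx
  by_contra! hfx
  -- Compare with the barrier `ε * (1 + (y - a))`, kept below both `δ` and `f x` on `[a, b]`.
  set ε := min δ (f x) / (2 * (1 + (b - a)))
  have hba : 0 < 1 + (b - a) := by linarith [hx.1, hx.2]
  have hε : 0 < ε := div_pos (lt_min hδ hfx) (by linarith)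
  have hεmax : ε * (1 + (b - a)) = min δ (f x) / 2 := by
    simp only [ε]; field_simp
  have hB : ∀ y ∈ Icc a b, ε * (1 + (y - a)) ≤ min δ (f x) / 2 := fun y hy => by
    rw [← hεmax]; gcongr; exact hy.2
  have hle := image_le_of_deriv_right_lt_deriv_boundary' hf hf'
    (B := fun y => ε * (1 + (y - a))) (B' := fun _ => ε) (by simpa using ha.trans hε.le)
    (by fun_prop)
    (fun y _ => by
      simpa using ((hasDerivAt_id y).sub_const a).const_add 1 |>.const_mul ε |>.hasDerivWithinAt)
    (fun y hy hfy => by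
      have := hB y (Ico_subset_Icc_self hy)
      have hpos : 0 < ε * (1 + (y - a)) := mul_pos hε (by linarith [hy.1])
      linarith [bound y hy (hfy ▸ hpos) (by linarith [min_le_left δ (f x)])])
    hx
  linarith [hB x hx, min_le_right δ (f x)]

section Wolbachia

variable {ρN αN βN ρW αW βW : ℝ} {N W : ℝ → ℝ}

theorem wolbachia_N_nonneg (hρN : 0 ≤ ρN) (hαN : 0 ≤ αN) (hβN : 0 ≤ βN)
    (hN : ∀ t : ℝ, HasDerivAt N
      (ρN * (N t)^2 / (N t + W t) - αN * N t - βN * N t * (N t + W t)) t)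
    (hW : (∀ t, W t = 0) ∨ ∀ t, 0 < W t) (hWc : Continuous W) (hN0 : 0 ≤ N 0) :
    ∀ t, 0 ≤ t → 0 ≤ N t := by
  intro t ht
  rcases hW with hW | hW
  · -- Without Wolbachia the equation for `N` is logistic: linear in `N` with a continuous rate.
    have hNc : Continuous N := continuous_iff_continuousAt.2 fun t => (hN t).continuousAt
    have hlin : ∀ t, HasDerivAt N ((ρN - αN - βN * N t) * N t) t := fun t => by
      refine (hN t).congr_deriv ?_
      rw [hW t, add_zero, sq, mul_div_assoc, mul_self_div_self]
      ring
    rw [eq_mul_exp_integral_of_hasDerivAt (by fun_prop) hlin t]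
    positivity
  · -- While `-N` is smaller than `min W` on `[0, t]`, we have `N + W > 0`, so `N` cannot decrease.
    obtain ⟨m, hm, hmin⟩ := isCompact_Icc.exists_isMinOn (nonempty_Icc.2 ht) hWc.continuousOn
    have hneg := nonpos_of_deriv_nonpos_of_pos_of_lt (f := fun s => -N s) (hW m)
      (fun s _ => (hN s).continuousAt.neg.continuousWithinAt)
      (fun s _ => (hN s).neg.hasDerivWithinAt) (by simpa using hN0)
      (fun s hs hpos hlt => by
        have hWs : W m ≤ W s := hmin (Ico_subset_Icc_self hs)
        have hsum : 0 < N s + W s := by linarith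
        have hdiv : 0 ≤ ρN * N s ^ 2 / (N s + W s) := by positivity
        nlinarith [mul_nonneg hαN hpos.le, mul_nonneg (mul_nonneg hβN hpos.le) hsum.le])
      t ⟨ht, le_rfl⟩
    linarith

theorem wolbachia_N_le (hρN : 0 ≤ ρN) (hβN : 0 < βN)
    (hN : ∀ t : ℝ, HasDerivAt N
      (ρN * (N t)^2 / (N t + W t) - αN * N t - βN * N t * (N t + W t)) t)
    (hNnn : ∀ t, 0 ≤ t → 0 ≤ N t) (hWnn : ∀ t, 0 ≤ t → 0 ≤ W t)
    (hN0 : N 0 ≤ (ρN - αN) / βN) :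
    ∀ t, 0 ≤ t → N t ≤ (ρN - αN) / βN := by
  intro t ht
  have hcap : βN * ((ρN - αN) / βN) = ρN - αN := mul_div_cancel₀ _ hβN.ne'
  have hle := nonpos_of_deriv_nonpos_of_pos_of_lt (f := fun s => N s - (ρN - αN) / βN) one_pos
    (fun s _ => ((hN s).continuousAt.sub continuousAt_const).continuousWithinAt)
    (fun s _ => ((hN s).sub_const _).hasDerivWithinAt) (by simpa using hN0)
    (fun s hs hpos _ => by
      have hN := hNnn s hs.1
      have hW := hWnn s hs.1
      have hdiv : ρN * N s ^ 2 / (N s + W s) ≤ ρN * N s :=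
        div_le_of_le_mul₀ (by positivity) (by positivity)
          (by nlinarith [mul_nonneg (mul_nonneg hρN hN) hW])
      have hid : ρN * N s - αN * N s - βN * N s * (N s + W s)
          = -(βN * N s * (N s - (ρN - αN) / βN)) - βN * N s * W s := by
        linear_combination -N s * hcap
      linarith [mul_nonneg (mul_nonneg hβN.le hN) hpos.le, mul_nonneg (mul_nonneg hβN.le hN) hW])
    t ⟨ht, le_rfl⟩
  linarith

theorem wolbachia_W_le (hβW : 0 < βW)
    (hW : ∀ t : ℝ, HasDerivAt W (ρW * W t - αW * W t - βW * W t * (N t + W t)) t)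
    (hNnn : ∀ t, 0 ≤ t → 0 ≤ N t) (hWnn : ∀ t, 0 ≤ t → 0 ≤ W t)
    (hW0 : W 0 ≤ (ρW - αW) / βW) :
    ∀ t, 0 ≤ t → W t ≤ (ρW - αW) / βW := by
  intro t ht
  have hcap : βW * ((ρW - αW) / βW) = ρW - αW := mul_div_cancel₀ _ hβW.ne'
  have hle := nonpos_of_deriv_nonpos_of_pos_of_lt (f := fun s => W s - (ρW - αW) / βW) one_pos
    (fun s _ => ((hW s).continuousAt.sub continuousAt_const).continuousWithinAt)
    (fun s _ => ((hW s).sub_const _).hasDerivWithinAt) (by simpa using hW0)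
    (fun s hs hpos _ => by
      have hN := hNnn s hs.1
      have hW := hWnn s hs.1
      have hid : ρW * W s - αW * W s - βW * W s * (N s + W s)
          = -(βW * W s * (W s - (ρW - αW) / βW)) - βW * W s * N s := by
        linear_combination -W s * hcap
      linarith [mul_nonneg (mul_nonneg hβW.le hW) hpos.le, mul_nonneg (mul_nonneg hβW.le hW) hN])
    t ⟨ht, le_rfl⟩
  linarith

end Wolbachia

theorem stmt_3_general (ρN ρW αN αW βN βW : ℝ)
    (hρN : 0 < ρN) (hαN : 0 < αN)
    (hβN : 0 < βN) (hβW : 0 < βW)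
    (N W : ℝ → ℝ)
    (hN : ∀ t : ℝ, HasDerivAt N
      (ρN * (N t)^2 / (N t + W t) - αN * N t - βN * N t * (N t + W t)) t)
    (hW : ∀ t : ℝ, HasDerivAt W
      (ρW * W t - αW * W t - βW * W t * (N t + W t)) t)
    (hN0 : N 0 ∈ Set.Icc 0 ((ρN - αN) / βN))
    (hW0 : W 0 ∈ Set.Icc 0 ((ρW - αW) / βW)) :
    ∀ t : ℝ, 0 ≤ t →
      N t ∈ Set.Icc 0 ((ρN - αN) / βN) ∧ W t ∈ Set.Icc 0 ((ρW - αW) / βW) := by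
  have hNc : Continuous N := continuous_iff_continuousAt.2 fun t => (hN t).continuousAt
  have hWc : Continuous W := continuous_iff_continuousAt.2 fun t => (hW t).continuousAt
  have hWexp : ∀ t, W t = W 0 * Real.exp (∫ s in (0 : ℝ)..t, ρW - αW - βW * (N s + W s)) :=
    eq_mul_exp_integral_of_hasDerivAt (by fun_prop) fun t => (hW t).congr_deriv (by ring)
  have hWnn : ∀ t, 0 ≤ t → 0 ≤ W t := fun t _ => by
    rw [hWexp t]; have := hW0.1; positivity
  have hWcases : (∀ t, W t = 0) ∨ ∀ t, 0 < W t := by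
    rcases hW0.1.eq_or_lt with h | h
    · exact Or.inl fun t => by rw [hWexp t, ← h, zero_mul]
    · exact Or.inr fun t => by rw [hWexp t]; positivity
  have hNnn := wolbachia_N_nonneg hρN.le hαN.le hβN.le hN hWcases hWc hN0.1
  intro t ht
  exact ⟨⟨hNnn t ht, wolbachia_N_le hρN.le hβN hN hNnn hWnn hN0.2 t ht⟩,
    ⟨hWnn t ht, wolbachia_W_le hβW hW hNnn hWnn hW0.2 t ht⟩⟩

theorem stmt_3 (ρN ρW αN αW βN βW : ℝ)
    (hρN : 0 < ρN) (hρW : 0 < ρW) (hαN : 0 < αN) (hαW : 0 < αW)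
    (hβN : 0 < βN) (hβW : 0 < βW)
    (hsN : αN < ρN) (hsW : αW < ρW)
    (N W : ℝ → ℝ)
    (hN : ∀ t : ℝ, HasDerivAt N
      (ρN * (N t)^2 / (N t + W t) - αN * N t - βN * N t * (N t + W t)) t)
    (hW : ∀ t : ℝ, HasDerivAt W
      (ρW * W t - αW * W t - βW * W t * (N t + W t)) t)
    (hN0 : N 0 ∈ Set.Icc 0 ((ρN - αN) / βN))
    (hW0 : W 0 ∈ Set.Icc 0 ((ρW - αW) / βW)) :
    ∀ t : ℝ, 0 ≤ t →
      N t ∈ Set.Icc 0 ((ρN - αN) / βN) ∧ W t ∈ Set.Icc 0 ((ρW - αW) / βW) :=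
  stmt_3_general ρN ρW αN αW βN βW hρN hαN hβN hβW N W hN hW hN0 hW0
end

section
/- The point E_c = (N_c, W_c) with N_c = W♯(1 − (β_N/ρ_N)(N♯ − W♯)) and W_c = W♯(β_N/ρ_N)(N♯ − W♯) satisfies F(N_c, W_c) = 0 and G(N_c, W_c) = 0, where F and G are the right-hand sides of the Wolbachia system; moreover N_c + W_c = W♯. -/
/-!
Write `N_c = W♯ θ` and `W_c = W♯ (1 - θ)` with `θ = 1 - (β_N/ρ_N)(N♯ - W♯)`, so that
`N_c + W_c = W♯`. Then `G(N_c, W_c) = W_c (ρ_W - α_W - β_W W♯) = 0`, and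
`F(N_c, W_c) = N_c (ρ_N θ - α_N - β_N W♯)`, which vanishes because
`ρ_N θ = ρ_N - β_N (N♯ - W♯) = α_N + β_N W♯`.
-/

lemma sq_mul_div_self {K : Type*} [Field K] (S θ : K) : (S * θ) ^ 2 / S = S * θ ^ 2 := by
  rw [show (S * θ) ^ 2 / S = S * S / S * θ ^ 2 by ring, mul_self_div_self]

lemma sq_div_rate_eq_zero_of_mul_eq {ρ α β S θ : ℝ} (h : ρ * θ = α + β * S) :
    ρ * (S * θ) ^ 2 / S - α * (S * θ) - β * (S * θ) * S = 0 := by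
  rw [mul_div_assoc, sq_mul_div_self]
  linear_combination S * θ * h

theorem stmt_4_general (ρN ρW αN αW βN βW : ℝ)
    (hρN : 0 < ρN)
    (hβN : 0 < βN) (hβW : 0 < βW)
    (Nsharp Wsharp Nc Wc : ℝ)
    (hNs : Nsharp = (ρN - αN) / βN) (hWs : Wsharp = (ρW - αW) / βW)
    (hNc : Nc = Wsharp * (1 - βN / ρN * (Nsharp - Wsharp)))
    (hWc : Wc = Wsharp * (βN / ρN * (Nsharp - Wsharp))) :
    ρN * Nc^2 / (Nc + Wc) - αN * Nc - βN * Nc * (Nc + Wc) = 0 ∧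
    ρW * Wc - αW * Wc - βW * Wc * (Nc + Wc) = 0 ∧
    Nc + Wc = Wsharp := by
  have hsum : Nc + Wc = Wsharp := by rw [hNc, hWc]; ring
  have hβNs : βN * Nsharp = ρN - αN := by rw [hNs, mul_div_cancel₀ _ hβN.ne']
  have hβWs : βW * Wsharp = ρW - αW := by rw [hWs, mul_div_cancel₀ _ hβW.ne']
  have hθ : ρN * (1 - βN / ρN * (Nsharp - Wsharp)) = αN + βN * Wsharp := by
    rw [mul_sub, ← mul_assoc, mul_div_cancel₀ _ hρN.ne']
    linear_combination -hβNs
  refine ⟨?_, ?_, hsum⟩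
  · rw [hsum, hNc]
    exact sq_div_rate_eq_zero_of_mul_eq hθ
  · rw [hsum]
    linear_combination -Wc * hβWs

theorem stmt_4 (ρN ρW αN αW βN βW : ℝ)
    (hρN : 0 < ρN) (hρW : 0 < ρW) (hαN : 0 < αN) (hαW : 0 < αW)
    (hβN : 0 < βN) (hβW : 0 < βW)
    (hsN : αN < ρN) (hsW : αW < ρW)
    (Nsharp Wsharp Nc Wc : ℝ)
    (hNs : Nsharp = (ρN - αN) / βN) (hWs : Wsharp = (ρW - αW) / βW)
    (hgap : 0 < Nsharp - Wsharp)
    (hlt : βN / ρN * (Nsharp - Wsharp) < 1)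
    (hNc : Nc = Wsharp * (1 - βN / ρN * (Nsharp - Wsharp)))
    (hWc : Wc = Wsharp * (βN / ρN * (Nsharp - Wsharp))) :
    ρN * Nc^2 / (Nc + Wc) - αN * Nc - βN * Nc * (Nc + Wc) = 0 ∧
    ρW * Wc - αW * Wc - βW * Wc * (Nc + Wc) = 0 ∧
    Nc + Wc = Wsharp :=
  stmt_4_general ρN ρW αN αW βN βW hρN hβN hβW Nsharp Wsharp Nc Wc hNs hWs hNc hWc
end

section
/- The system dN/dt = F(N,W), dW/dt = G(N,W) has exactly four equilibria in the closed positive quadrant when ρ_N > α_N, ρ_W > α_W, and 0 < (β_N/ρ_N)(N♯ − W♯) < 1: namely (0,0), (N♯, 0), (0, W♯), and (N_c, W_c), where N_c = W♯(1 − (β_N/ρ_N)(N♯ − W♯)) and W_c = W♯(β_N/ρ_N)(N♯ − W♯). -/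
theorem stmt_5 (ρN ρW αN αW βN βW : ℝ)
    (hρN : 0 < ρN) (hρW : 0 < ρW) (hαN : 0 < αN) (hαW : 0 < αW)
    (hβN : 0 < βN) (hβW : 0 < βW)
    (hsN : αN < ρN) (hsW : αW < ρW)
    (Nsharp Wsharp Nc Wc : ℝ)
    (hNs : Nsharp = (ρN - αN) / βN) (hWs : Wsharp = (ρW - αW) / βW)
    (hgap : 0 < βN / ρN * (Nsharp - Wsharp))
    (hlt : βN / ρN * (Nsharp - Wsharp) < 1)
    (hNc : Nc = Wsharp * (1 - βN / ρN * (Nsharp - Wsharp)))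
    (hWc : Wc = Wsharp * (βN / ρN * (Nsharp - Wsharp))) :
    {p : ℝ × ℝ | 0 ≤ p.1 ∧ 0 ≤ p.2 ∧
        ρN * p.1^2 / (p.1 + p.2) - αN * p.1 - βN * p.1 * (p.1 + p.2) = 0 ∧
        ρW * p.2 - αW * p.2 - βW * p.2 * (p.1 + p.2) = 0}
      = {(0, 0), (Nsharp, 0), (0, Wsharp), (Nc, Wc)} := by
  have hWspos : 0 < Wsharp := by rw [hWs]; exact div_pos (by linarith) hβW
  have hNspos : 0 < Nsharp := by rw [hNs]; exact div_pos (by linarith) hβN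
  have hbNs : βN * Nsharp = ρN - αN := by rw [hNs]; field_simp
  have hbWs : βW * Wsharp = ρW - αW := by rw [hWs]; field_simp
  have hNcpos : 0 < Nc := by
    rw [hNc]; exact mul_pos hWspos (by linarith)
  have hWcpos : 0 < Wc := by
    rw [hWc]; exact mul_pos hWspos hgap
  have hsum : Nc + Wc = Wsharp := by rw [hNc, hWc]; ring
  have hNceq : ρN * Nc = Wsharp * (αN + βN * Wsharp) := by
    have h : ρN * Nc = Wsharp * (ρN - βN * (Nsharp - Wsharp)) := by
      rw [hNc]; field_simp
    rw [h]; linear_combination (-Wsharp) * hbNs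
  ext ⟨N, W⟩
  simp only [Set.mem_setOf_eq, Set.mem_insert_iff, Set.mem_singleton_iff, Prod.mk.injEq]
  constructor
  · rintro ⟨hN, hW, h1, h2⟩
    rcases eq_or_lt_of_le hN with hN0 | hNpos
    · -- N = 0
      have h2' : W * (ρW - αW - βW * W) = 0 := by rw [← hN0] at h2; linarith
      rcases mul_eq_zero.1 h2' with hW0 | hWeq
      · left; exact ⟨hN0.symm, hW0⟩
      · right; right; left
        refine ⟨hN0.symm, ?_⟩
        have : βW * W = βW * Wsharp := by linarith
        exact mul_left_cancel₀ (ne_of_gt hβW) this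
    · -- N > 0
      rcases eq_or_lt_of_le hW with hW0 | hWpos
      · -- W = 0
        right; left
        have hNne : N ≠ 0 := ne_of_gt hNpos
        rw [← hW0] at h1
        have h1' : ρN * N ^ 2 / (N + 0) = ρN * N := by field_simp; ring
        rw [h1'] at h1
        have hz : N * (ρN - αN - βN * N) = 0 := by linarith
        rcases mul_eq_zero.1 hz with h | h
        · exact absurd h hNne
        · refine ⟨?_, hW0.symm⟩
          have : βN * N = βN * Nsharp := by linarith
          exact mul_left_cancel₀ (ne_of_gt hβN) this
      · -- W > 0
        right; right; right
        have hsumW : N + W = Wsharp := by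
          have h2' : W * (ρW - αW - βW * (N + W)) = 0 := by linarith
          rcases mul_eq_zero.1 h2' with h | h
          · exact absurd h (ne_of_gt hWpos)
          · have : βW * (N + W) = βW * Wsharp := by linarith
            exact mul_left_cancel₀ (ne_of_gt hβW) this
        rw [hsumW] at h1
        have hd : ρN * N ^ 2 = (αN * N + βN * N * Wsharp) * Wsharp :=
          (div_eq_iff (ne_of_gt hWspos)).mp (by linarith)
        have hNval : N = Nc := by
          have hz : N * (ρN * N - Wsharp * (αN + βN * Wsharp)) = 0 := by
            linear_combination hd
          rcases mul_eq_zero.1 hz with h | h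
          · exact absurd h (ne_of_gt hNpos)
          · have : ρN * N = ρN * Nc := by rw [hNceq]; linarith
            exact mul_left_cancel₀ (ne_of_gt hρN) this
        exact ⟨hNval, by linarith [hsum, hsumW, hNval]⟩
  · rintro (⟨h1, h2⟩ | ⟨h1, h2⟩ | ⟨h1, h2⟩ | ⟨h1, h2⟩) <;> rw [h1, h2]
    · norm_num
    · refine ⟨le_of_lt hNspos, le_refl 0, ?_, by ring⟩
      have h1' : ρN * Nsharp ^ 2 / (Nsharp + 0) = ρN * Nsharp := by field_simp; ring
      rw [h1']; linear_combination (-Nsharp) * hbNs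
    · refine ⟨le_refl 0, le_of_lt hWspos, by norm_num, ?_⟩
      linear_combination (-Wsharp) * hbWs
    · refine ⟨le_of_lt hNcpos, le_of_lt hWcpos, ?_, ?_⟩
      · rw [hsum]
        have h : ρN * Nc ^ 2 / Wsharp = αN * Nc + βN * Nc * Wsharp := by
          rw [div_eq_iff (ne_of_gt hWspos)]; linear_combination Nc * hNceq
        linarith
      · rw [hsum]; linear_combination (-Wc) * hbWs
end

section
/- At the wild-only equilibrium E_N = (N♯, 0), the Jacobian of the Wolbachia system is upper triangular with diagonal entries −(ρ_N − α_N) and −β_W(N♯ − W♯), both strictly negative under the assumptions ρ_N > α_N, ρ_W > α_W, N♯ > W♯; hence both eigenvalues are negative. -/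
/-!
With `W = 0` the lower-left entry `-β_W W` vanishes, so the Jacobian is upper triangular and its
eigenvalues are its diagonal entries. The equilibrium relations `β_N N♯ = ρ_N - α_N` and
`β_W W♯ = ρ_W - α_W` turn these into `-(ρ_N - α_N)` and `-β_W (N♯ - W♯)`.
-/

open Polynomial

theorem Matrix.IsUpperTriangular.exists_eq_diag_of_isRoot_charpoly {n R : Type*} [Fintype n]
    [DecidableEq n] [LinearOrder n] [CommRing R] [IsDomain R] {M : Matrix n n R}
    (hM : M.IsUpperTriangular) {μ : R} (hμ : M.charpoly.IsRoot μ) : ∃ i, μ = M i i := by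
  rw [charpoly_of_isUpperTriangular M hM, isRoot_prod] at hμ
  obtain ⟨i, -, hi⟩ := hμ
  exact ⟨i, by simpa [sub_eq_zero] using hi⟩

theorem Matrix.isUpperTriangular_fin_two {R : Type*} [Zero R] {M : Matrix (Fin 2) (Fin 2) R}
    (h : M 1 0 = 0) : M.IsUpperTriangular := by
  intro i j hji
  fin_cases i <;> fin_cases j <;> simp_all

section Wolbachia

variable (ρN ρW αN αW βN βW : ℝ)

/-- The Jacobian of `(F, G)` at `(N, W)`, valid where `N + W > 0`. -/
noncomputable def wolbachiaJacobian (N W : ℝ) : Matrix (Fin 2) (Fin 2) ℝ :=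
  !![ρN * (1 - W ^ 2 / (N + W) ^ 2) - αN - βN * (W + 2 * N),
     -N * (βN + ρN * N / (N + W) ^ 2);
     -βW * W,
     ρW - αW - βW * (N + 2 * W)]

theorem wolbachiaJacobian_wildOnly_one_zero (N : ℝ) :
    wolbachiaJacobian ρN ρW αN αW βN βW N 0 1 0 = 0 := by
  simp [wolbachiaJacobian]

theorem wolbachiaJacobian_wildOnly_isUpperTriangular (N : ℝ) :
    (wolbachiaJacobian ρN ρW αN αW βN βW N 0).IsUpperTriangular :=
  Matrix.isUpperTriangular_fin_two (wolbachiaJacobian_wildOnly_one_zero ..)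

variable {ρN ρW αN αW βN βW}

theorem wolbachiaJacobian_wildOnly_zero_zero {N : ℝ} (hN : βN * N = ρN - αN) :
    wolbachiaJacobian ρN ρW αN αW βN βW N 0 0 0 = -(ρN - αN) := by
  simp only [wolbachiaJacobian, Matrix.of_apply, Matrix.cons_val', Matrix.cons_val_zero,
    Matrix.empty_val', Matrix.cons_val_fin_one]
  linear_combination (-2) * hN

theorem wolbachiaJacobian_wildOnly_one_one {W : ℝ} (hW : βW * W = ρW - αW) (N : ℝ) :
    wolbachiaJacobian ρN ρW αN αW βN βW N 0 1 1 = -βW * (N - W) := by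
  simp only [wolbachiaJacobian, Matrix.of_apply, Matrix.cons_val', Matrix.cons_val_one,
    Matrix.empty_val', Matrix.cons_val_fin_one]
  linear_combination -hW

end Wolbachia

theorem stmt_6_general (ρN ρW αN αW βN βW : ℝ)
    (hβN : 0 < βN) (hβW : 0 < βW)
    (hsN : αN < ρN)
    (Nsharp Wsharp : ℝ)
    (hNs : Nsharp = (ρN - αN) / βN) (hWs : Wsharp = (ρW - αW) / βW)
    (hgap : Wsharp < Nsharp)
    (J : ℝ → ℝ → Matrix (Fin 2) (Fin 2) ℝ)
    (hJ : ∀ N W : ℝ, J N W =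
      !![ρN * (1 - W^2 / (N + W)^2) - αN - βN * (W + 2 * N),
         -N * (βN + ρN * N / (N + W)^2);
         -βW * W,
         ρW - αW - βW * (N + 2 * W)]) :
    J Nsharp 0 1 0 = 0 ∧
    J Nsharp 0 0 0 = -(ρN - αN) ∧
    J Nsharp 0 1 1 = -βW * (Nsharp - Wsharp) ∧
    J Nsharp 0 0 0 < 0 ∧
    J Nsharp 0 1 1 < 0 ∧
    (∀ μ : ℝ, (J Nsharp 0).charpoly.IsRoot μ → μ < 0) := by
  obtain rfl : J = wolbachiaJacobian ρN ρW αN αW βN βW := funext₂ hJ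
  have hN : βN * Nsharp = ρN - αN := by rw [hNs, mul_div_cancel₀ _ hβN.ne']
  have hW : βW * Wsharp = ρW - αW := by rw [hWs, mul_div_cancel₀ _ hβW.ne']
  have h00 := wolbachiaJacobian_wildOnly_zero_zero (ρW := ρW) (αW := αW) (βW := βW) hN
  have h11 := wolbachiaJacobian_wildOnly_one_one (ρN := ρN) (αN := αN) (βN := βN) hW Nsharp
  have hlt00 : wolbachiaJacobian ρN ρW αN αW βN βW Nsharp 0 0 0 < 0 := by rw [h00]; linarith
  have hlt11 : wolbachiaJacobian ρN ρW αN αW βN βW Nsharp 0 1 1 < 0 := by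
    rw [h11, neg_mul]
    exact neg_neg_of_pos (mul_pos hβW (sub_pos.2 hgap))
  refine ⟨wolbachiaJacobian_wildOnly_one_zero .., h00, h11, hlt00, hlt11, fun μ hμ => ?_⟩
  obtain ⟨i, rfl⟩ :=
    (wolbachiaJacobian_wildOnly_isUpperTriangular ..).exists_eq_diag_of_isRoot_charpoly hμ
  fin_cases i
  exacts [hlt00, hlt11]

theorem stmt_6 (ρN ρW αN αW βN βW : ℝ)
    (hρN : 0 < ρN) (hρW : 0 < ρW) (hαN : 0 < αN) (hαW : 0 < αW)
    (hβN : 0 < βN) (hβW : 0 < βW)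
    (hsN : αN < ρN) (hsW : αW < ρW)
    (Nsharp Wsharp : ℝ)
    (hNs : Nsharp = (ρN - αN) / βN) (hWs : Wsharp = (ρW - αW) / βW)
    (hgap : Wsharp < Nsharp)
    (J : ℝ → ℝ → Matrix (Fin 2) (Fin 2) ℝ)
    (hJ : ∀ N W : ℝ, J N W =
      !![ρN * (1 - W^2 / (N + W)^2) - αN - βN * (W + 2 * N),
         -N * (βN + ρN * N / (N + W)^2);
         -βW * W,
         ρW - αW - βW * (N + 2 * W)]) :
    J Nsharp 0 1 0 = 0 ∧
    J Nsharp 0 0 0 = -(ρN - αN) ∧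
    J Nsharp 0 1 1 = -βW * (Nsharp - Wsharp) ∧
    J Nsharp 0 0 0 < 0 ∧
    J Nsharp 0 1 1 < 0 ∧
    (∀ μ : ℝ, (J Nsharp 0).charpoly.IsRoot μ → μ < 0) :=
  stmt_6_general ρN ρW αN αW βN βW hβN hβW hsN Nsharp Wsharp hNs hWs hgap J hJ
end

section
/- At the Wolbachia-only equilibrium E_W = (0, W♯), the Jacobian of the system is lower triangular with diagonal entries −α_N − β_N W♯ and −(ρ_W − α_W), both strictly negative when all parameters are positive and ρ_W > α_W; hence both eigenvalues are negative. -/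
theorem stmt_7 (ρN ρW αN αW βN βW : ℝ)
    (hρN : 0 < ρN) (hρW : 0 < ρW) (hαN : 0 < αN) (hαW : 0 < αW)
    (hβN : 0 < βN) (hβW : 0 < βW)
    (hsW : αW < ρW)
    (Wsharp : ℝ) (hWs : Wsharp = (ρW - αW) / βW)
    (J : ℝ → ℝ → Matrix (Fin 2) (Fin 2) ℝ)
    (hJ : ∀ N W : ℝ, J N W =
      !![ρN * (1 - W^2 / (N + W)^2) - αN - βN * (W + 2 * N),
         -N * (βN + ρN * N / (N + W)^2);
         -βW * W,
         ρW - αW - βW * (N + 2 * W)]) :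
    J 0 Wsharp 0 1 = 0 ∧
    J 0 Wsharp 0 0 = -αN - βN * Wsharp ∧
    J 0 Wsharp 1 1 = -(ρW - αW) ∧
    J 0 Wsharp 0 0 < 0 ∧
    J 0 Wsharp 1 1 < 0 ∧
    (∀ μ : ℝ, (J 0 Wsharp).charpoly.IsRoot μ → μ < 0) := by
  have hWpos : 0 < Wsharp := by
    rw [hWs]; exact div_pos (by linarith) hβW
  have hW2 : (0 + Wsharp)^2 ≠ 0 := by positivity
  have h00 : J 0 Wsharp 0 0 = -αN - βN * Wsharp := by
    rw [hJ]
    have : Wsharp ^ 2 / Wsharp ^ 2 = 1 := div_self (by positivity)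
    simp [this]
  have h01 : J 0 Wsharp 0 1 = 0 := by
    rw [hJ]; simp
  have h11 : J 0 Wsharp 1 1 = -(ρW - αW) := by
    have hb : βW * Wsharp = ρW - αW := by
      rw [hWs]; field_simp
    rw [hJ]; simp; linarith
  have hneg0 : J 0 Wsharp 0 0 < 0 := by rw [h00]; nlinarith
  have hneg1 : J 0 Wsharp 1 1 < 0 := by rw [h11]; linarith
  refine ⟨h01, h00, h11, hneg0, hneg1, ?_⟩
  intro μ hμ
  have hcp : (J 0 Wsharp).charpoly =
      (Polynomial.X - Polynomial.C (J 0 Wsharp 0 0)) *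
      (Polynomial.X - Polynomial.C (J 0 Wsharp 1 1)) -
      (- Polynomial.C (J 0 Wsharp 0 1)) * (- Polynomial.C (J 0 Wsharp 1 0)) := by
    rw [Matrix.charpoly, Matrix.det_fin_two]
    simp [Matrix.charmatrix_apply_eq, Matrix.charmatrix_apply_ne]
  rw [Polynomial.IsRoot, hcp] at hμ
  simp [h01] at hμ
  rcases hμ with h | h
  · rw [sub_eq_zero] at h; rw [h]; exact hneg0
  · rw [sub_eq_zero] at h; rw [h]; exact hneg1
end

section
/- The determinant of the Jacobian at the coexistence equilibrium is strictly negative: det J(N_c, W_c) = −β_W β_N (N♯ − W♯) N_c < 0, under the standing assumptions; hence the coexistence equilibrium is a saddle point (the two eigenvalues are real with opposite signs). -/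
open Polynomial in
theorem charpoly_fin_two' (M : Matrix (Fin 2) (Fin 2) ℝ) :
    M.charpoly = X ^ 2 - C M.trace * X + C M.det := by
  rw [Matrix.charpoly, Matrix.det_fin_two, Matrix.trace_fin_two, Matrix.det_fin_two]
  simp [Matrix.charmatrix_apply_eq, Matrix.charmatrix_apply_ne]
  ring

theorem stmt_8 (ρN ρW αN αW βN βW : ℝ)
    (hρN : 0 < ρN) (hρW : 0 < ρW) (hαN : 0 < αN) (hαW : 0 < αW)
    (hβN : 0 < βN) (hβW : 0 < βW)
    (hsN : αN < ρN) (hsW : αW < ρW)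
    (Nsharp Wsharp Nc Wc : ℝ)
    (hNs : Nsharp = (ρN - αN) / βN) (hWs : Wsharp = (ρW - αW) / βW)
    (hgap : Wsharp < Nsharp)
    (hlt : βN / ρN * (Nsharp - Wsharp) < 1)
    (hNc : Nc = Wsharp * (1 - βN / ρN * (Nsharp - Wsharp)))
    (hWc : Wc = Wsharp * (βN / ρN * (Nsharp - Wsharp)))
    (J : ℝ → ℝ → Matrix (Fin 2) (Fin 2) ℝ)
    (hJ : ∀ N W : ℝ, J N W =
      !![ρN * (1 - W^2 / (N + W)^2) - αN - βN * (W + 2 * N),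
         -N * (βN + ρN * N / (N + W)^2);
         -βW * W,
         ρW - αW - βW * (N + 2 * W)]) :
    (J Nc Wc).det = -(βW * βN * (Nsharp - Wsharp) * Nc) ∧
    (J Nc Wc).det < 0 ∧
    ∃ lam1 lam2 : ℝ, lam1 < 0 ∧ 0 < lam2 ∧
      (J Nc Wc).charpoly.IsRoot lam1 ∧ (J Nc Wc).charpoly.IsRoot lam2 := by
  have hWspos : 0 < Wsharp := by rw [hWs]; exact div_pos (by linarith) hβW
  have hsum : Nc + Wc = Wsharp := by rw [hNc, hWc]; ring
  have hNcpos : 0 < Nc := by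
    rw [hNc]; exact mul_pos hWspos (by linarith)
  have hαN' : αN = ρN - βN * Nsharp := by
    rw [hNs]; field_simp; ring
  have hαW' : αW = ρW - βW * Wsharp := by
    rw [hWs]; field_simp; ring
  have hdet : (J Nc Wc).det = -(βW * βN * (Nsharp - Wsharp) * Nc) := by
    rw [hJ, Matrix.det_fin_two_of, hsum, hαN', hαW', hNc, hWc]
    field_simp
    ring
  have hdetneg : (J Nc Wc).det < 0 := by
    rw [hdet]
    have : 0 < βW * βN * (Nsharp - Wsharp) * Nc :=
      mul_pos (mul_pos (mul_pos hβW hβN) (by linarith)) hNcpos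
    linarith
  refine ⟨hdet, hdetneg, ?_⟩
  set t := (J Nc Wc).trace with ht
  set d := (J Nc Wc).det with hd
  set s := Real.sqrt (t ^ 2 - 4 * d) with hs
  have hsnn : 0 ≤ s := Real.sqrt_nonneg _
  have hs2 : s ^ 2 = t ^ 2 - 4 * d := Real.sq_sqrt (by nlinarith)
  refine ⟨(t - s) / 2, (t + s) / 2, ?_, ?_, ?_, ?_⟩
  · nlinarith
  · nlinarith
  · simp only [charpoly_fin_two', Polynomial.IsRoot, Polynomial.eval_add,
      Polynomial.eval_sub, Polynomial.eval_pow, Polynomial.eval_mul,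
      Polynomial.eval_C, Polynomial.eval_X]
    linear_combination hs2 / 4
  · simp only [charpoly_fin_two', Polynomial.IsRoot, Polynomial.eval_add,
      Polynomial.eval_sub, Polynomial.eval_pow, Polynomial.eval_mul,
      Polynomial.eval_C, Polynomial.eval_X]
    linear_combination hs2 / 4
end

section
/- If ρ_N < α_N and ρ_W < α_W, then the origin (0,0) is the only equilibrium of the Wolbachia system in the closed positive quadrant, and every solution with nonnegative initial data converges to (0,0) as t → ∞. -/
open Filter Set intervalIntegral MeasureTheory

/-- Local uniqueness for linear ODE: if f' = g f on open U with g continuous on U,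
and f a = 0, then f b = 0 for [a,b] ⊆ U. -/
lemma local_lin_zero (f g : ℝ → ℝ) (a b : ℝ) (hab : a ≤ b) (U : Set ℝ) (hU : IsOpen U)
    (hsub : Set.Icc a b ⊆ U) (hg : ContinuousOn g U)
    (hf : ∀ t ∈ U, HasDerivAt f (g t * f t) t) (ha : f a = 0) : f b = 0 := by
  set H : ℝ → ℝ := fun t => ∫ s in a..t, g s with hH
  have hHd : ∀ t ∈ Set.Icc a b, HasDerivAt H (g t) t := by
    intro t ht
    have hint : IntervalIntegrable g MeasureTheory.volume a t := by
      apply ContinuousOn.intervalIntegrable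
      apply hg.mono
      intro x hx
      apply hsub
      rcases Set.mem_uIcc.1 hx with h | h
      · exact ⟨h.1, le_trans h.2 ht.2⟩
      · exact ⟨le_trans ht.1 h.1, le_trans h.2 hab⟩
    exact integral_hasDerivAt_right hint
      (hg.stronglyMeasurableAtFilter hU t (hsub ht))
      (hg.continuousAt (hU.mem_nhds (hsub ht)))
  set φ : ℝ → ℝ := fun t => f t * Real.exp (-(H t)) with hφ
  have hφd : ∀ t ∈ Set.Icc a b, HasDerivAt φ 0 t := by
    intro t ht
    have h1 := (hf t (hsub ht)).mul (((hHd t ht).neg).exp)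
    refine h1.congr_deriv ?_
    simp only [Pi.neg_apply]; ring
  have hconst := constant_of_has_deriv_right_zero
    (f := φ) (a := a) (b := b)
    (fun t ht => (hφd t ht).continuousAt.continuousWithinAt)
    (fun t ht => ((hφd t ⟨ht.1, le_of_lt ht.2⟩).hasDerivWithinAt))
  have hb := hconst b (Set.right_mem_Icc.2 hab)
  have ha' : φ a = 0 := by simp [hφ, ha]
  rw [ha'] at hb
  rcases mul_eq_zero.1 hb with h | h
  · exact h
  · exact absurd h (Real.exp_ne_zero _)

/-- Global formula for linear ODE. -/
lemma global_lin (f g : ℝ → ℝ) (hg : Continuous g)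
    (hf : ∀ t, HasDerivAt f (g t * f t) t) (t : ℝ) :
    f t = f 0 * Real.exp (∫ s in (0:ℝ)..t, g s) := by
  set H : ℝ → ℝ := fun t => ∫ s in (0:ℝ)..t, g s with hH
  have hHd : ∀ t, HasDerivAt H (g t) t := fun t =>
    integral_hasDerivAt_right (hg.intervalIntegrable _ _)
      (hg.stronglyMeasurable.stronglyMeasurableAtFilter) hg.continuousAt
  set φ : ℝ → ℝ := fun t => f t * Real.exp (-(H t)) with hφ
  have hφd : ∀ t, HasDerivAt φ 0 t := by
    intro t
    have h1 := (hf t).mul (((hHd t).neg).exp)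
    refine h1.congr_deriv ?_
    simp only [Pi.neg_apply]; ring
  have hconst : φ t = φ 0 :=
    is_const_of_deriv_eq_zero (fun x => (hφd x).differentiableAt)
      (fun x => (hφd x).deriv) t 0
  have h0 : H 0 = 0 := by simp [hH]
  have heq : f t * Real.exp (-(H t)) = f 0 * Real.exp (-(H 0)) := hconst
  rw [h0] at heq
  simp only [neg_zero, Real.exp_zero, mul_one] at heq
  have := congrArg (fun x => x * Real.exp (H t)) heq
  simpa [mul_assoc, ← Real.exp_add] using this

/-- Exponential decay from a differential inequality. -/
lemma decay_aux (f f' : ℝ → ℝ) (c : ℝ) (hc : 0 < c)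
    (hf : ∀ t, HasDerivAt f (f' t) t)
    (hle : ∀ t, 0 ≤ t → f' t + c * f t ≤ 0)
    (hnn : ∀ t, 0 ≤ t → 0 ≤ f t) :
    Filter.Tendsto f Filter.atTop (nhds 0) := by
  set φ : ℝ → ℝ := fun t => f t * Real.exp (c * t) with hφdef
  have hφd : ∀ t, HasDerivAt φ ((f' t + c * f t) * Real.exp (c * t)) t := by
    intro t
    have h1 := (hf t).mul (((hasDerivAt_id t).const_mul c).exp)
    refine h1.congr_deriv ?_
    simp only [id]; ring
  have hanti : AntitoneOn φ (Set.Ici 0) := by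
    apply antitoneOn_of_deriv_nonpos (convex_Ici 0)
    · exact fun t _ => (hφd t).continuousAt.continuousWithinAt
    · exact fun t _ => (hφd t).differentiableAt.differentiableWithinAt
    · intro t ht
      rw [interior_Ici] at ht
      rw [(hφd t).deriv]
      exact mul_nonpos_of_nonpos_of_nonneg (hle t (le_of_lt ht)) (Real.exp_pos _).le
  have hub : ∀ t, 0 ≤ t → f t ≤ f 0 * Real.exp (-(c * t)) := by
    intro t ht
    have h1 : φ t ≤ φ 0 := hanti Set.self_mem_Ici ht ht
    have h2 : f t = φ t * Real.exp (-(c * t)) := by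
      simp [hφdef, mul_assoc, ← Real.exp_add]
    rw [h2]
    have h3 : φ 0 = f 0 := by simp [hφdef]
    calc φ t * Real.exp (-(c * t)) ≤ φ 0 * Real.exp (-(c * t)) :=
          mul_le_mul_of_nonneg_right h1 (Real.exp_pos _).le
      _ = f 0 * Real.exp (-(c * t)) := by rw [h3]
  have hbound : Filter.Tendsto (fun t => f 0 * Real.exp (-(c * t))) Filter.atTop (nhds 0) := by
    have h1 : Filter.Tendsto (fun t : ℝ => c * t) Filter.atTop Filter.atTop :=
      Filter.Tendsto.const_mul_atTop hc tendsto_id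
    have h2 : Filter.Tendsto (fun t : ℝ => -(c * t)) Filter.atTop Filter.atBot :=
      tendsto_neg_atBot_iff.mpr h1
    have h3 := Real.tendsto_exp_atBot.comp h2
    have := h3.const_mul (f 0)
    simpa using this
  exact tendsto_of_tendsto_of_tendsto_of_le_of_le' tendsto_const_nhds hbound
    (Filter.eventually_atTop.2 ⟨0, hnn⟩) (Filter.eventually_atTop.2 ⟨0, hub⟩)

theorem stmt_13 (ρN ρW αN αW βN βW : ℝ)
    (hρN : 0 < ρN) (hρW : 0 < ρW) (hαN : 0 < αN) (hαW : 0 < αW)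
    (hβN : 0 < βN) (hβW : 0 < βW)
    (hdN : ρN < αN) (hdW : ρW < αW) :
    (∀ N W : ℝ, 0 ≤ N → 0 ≤ W →
      ρN * N^2 / (N + W) - αN * N - βN * N * (N + W) = 0 →
      ρW * W - αW * W - βW * W * (N + W) = 0 →
      N = 0 ∧ W = 0) ∧
    (∀ N W : ℝ → ℝ,
      (∀ t : ℝ, HasDerivAt N
        (ρN * (N t)^2 / (N t + W t) - αN * N t - βN * N t * (N t + W t)) t) →
      (∀ t : ℝ, HasDerivAt W
        (ρW * W t - αW * W t - βW * W t * (N t + W t)) t) →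
      0 ≤ N 0 → 0 ≤ W 0 →
      Filter.Tendsto (fun t => (N t, W t)) Filter.atTop (nhds (0, 0))) := by
  constructor
  · -- equilibrium uniqueness
    intro N W hN hW hF hG
    have hWz : W = 0 := by
      by_contra hW0
      have hWpos : 0 < W := lt_of_le_of_ne hW (Ne.symm hW0)
      nlinarith [mul_pos hβW hWpos, mul_nonneg (mul_pos hβW hWpos).le hN,
        mul_pos (mul_pos hβW hWpos) hWpos]
    subst hWz
    refine ⟨?_, rfl⟩
    by_contra hN0
    have hNpos : 0 < N := lt_of_le_of_ne hN (Ne.symm hN0)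
    have hdiv : ρN * N^2 / (N + 0) = ρN * N := by
      field_simp
      ring
    rw [hdiv] at hF
    nlinarith [mul_pos (mul_pos hβN hNpos) hNpos]
  · -- convergence
    intro N W hNd hWd hN0 hW0
    have hNc : Continuous N := by
      rw [continuous_iff_continuousAt]; exact fun t => (hNd t).continuousAt
    have hWc : Continuous W := by
      rw [continuous_iff_continuousAt]; exact fun t => (hWd t).continuousAt
    -- W satisfies a linear ODE with continuous coefficient
    set g : ℝ → ℝ := fun t => ρW - αW - βW * (N t + W t) with hgdef
    have hgc : Continuous g := continuous_const.sub (continuous_const.mul (hNc.add hWc))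
    have hWode : ∀ t, HasDerivAt W (g t * W t) t := by
      intro t
      convert hWd t using 1
      simp only [hgdef]
      ring
    have hWformula := global_lin W g hgc hWode
    have hWnn : ∀ t, 0 ≤ W t := fun t => by
      rw [hWformula t]; exact mul_nonneg hW0 (Real.exp_pos _).le
    -- N is nonnegative for t ≥ 0
    have hNnn : ∀ t, 0 ≤ t → 0 ≤ N t := by
      by_cases hWz : W 0 = 0
      · -- W ≡ 0, N satisfies linear ODE with continuous coefficient
        have hW0' : ∀ t, W t = 0 := fun t => by rw [hWformula t, hWz, zero_mul]
        set h : ℝ → ℝ := fun t => ρN - αN - βN * N t with hhdef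
        have hhc : Continuous h := continuous_const.sub (continuous_const.mul hNc)
        have hNode : ∀ t, HasDerivAt N (h t * N t) t := by
          intro t
          convert hNd t using 1
          rw [hW0' t]
          rcases eq_or_ne (N t) 0 with h0 | h0
          · simp [h0, hhdef]
          · simp only [hhdef, add_zero]
            field_simp
        have hNformula := global_lin N h hhc hNode
        intro t _
        rw [hNformula t]
        exact mul_nonneg hN0 (Real.exp_pos _).le
      · -- W > 0 everywhere
        have hWpos : ∀ t, 0 < W t := fun t => by
          rw [hWformula t]
          exact mul_pos (lt_of_le_of_ne hW0 (Ne.symm hWz)) (Real.exp_pos _)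
        intro t1 ht1
        by_contra hneg
        push_neg at hneg
        -- last zero of N before t1
        set B : Set ℝ := {t | t ∈ Set.Icc 0 t1 ∧ 0 ≤ N t} with hBdef
        have hBne : B.Nonempty := ⟨0, ⟨Set.left_mem_Icc.2 ht1, hN0⟩⟩
        have hBbdd : BddAbove B := ⟨t1, fun x hx => hx.1.2⟩
        have hBclosed : IsClosed B := by
          have : B = Set.Icc 0 t1 ∩ N ⁻¹' (Set.Ici 0) := by
            ext x; simp [hBdef, Set.mem_Icc]
          rw [this]
          exact isClosed_Icc.inter (isClosed_Ici.preimage hNc)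
        set ts := sSup B with htsdef
        have htsB : ts ∈ B := hBclosed.csSup_mem hBne hBbdd
        have hts01 : ts ∈ Set.Icc 0 t1 := htsB.1
        have htsN : 0 ≤ N ts := htsB.2
        have hts_lt : ts < t1 := lt_of_le_of_ne hts01.2 (by
          intro h; rw [h] at htsN; linarith)
        have hafter : ∀ t ∈ Set.Ioc ts t1, N t < 0 := by
          intro t ht
          by_contra hge
          push_neg at hge
          have : t ∈ B := ⟨⟨le_trans hts01.1 ht.1.le, ht.2⟩, hge⟩
          exact absurd (le_csSup hBbdd this) (not_le.2 ht.1)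
        have htsN0 : N ts = 0 := by
          refine le_antisymm ?_ htsN
          by_contra hpos
          push_neg at hpos
          have h1 : ∀ᶠ x in nhdsWithin ts (Set.Ioi ts), 0 < N x :=
            eventually_nhdsWithin_of_eventually_nhds
              (hNc.continuousAt.eventually_mem (Ioi_mem_nhds hpos))
          have h2 : ∀ᶠ x in nhdsWithin ts (Set.Ioi ts), N x < 0 := by
            filter_upwards [Ioc_mem_nhdsGT_of_mem (Set.left_mem_Ico.2 hts_lt)] with x hx
            exact hafter x hx
          rcases (h1.and h2).exists with ⟨x, hx1, hx2⟩
          linarith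
        -- N + W > 0 near ts, linear ODE locally
        set U : Set ℝ := (fun t => N t + W t) ⁻¹' (Set.Ioi 0) with hUdef
        have hUopen : IsOpen U := isOpen_Ioi.preimage (hNc.add hWc)
        have htsU : ts ∈ U := by
          simp only [hUdef, Set.mem_preimage, Set.mem_Ioi, htsN0, zero_add]
          exact hWpos ts
        rcases Metric.isOpen_iff.1 hUopen ts htsU with ⟨ε, hε, hball⟩
        set b := min (ts + ε / 2) t1 with hbdef
        have htsb : ts < b := lt_min (by linarith) hts_lt
        have hbt1 : b ≤ t1 := min_le_right _ _
        have hIccU : Set.Icc ts b ⊆ U := by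
          intro x hx
          apply hball
          rw [Metric.mem_ball, Real.dist_eq, abs_lt]
          constructor
          · linarith [hx.1]
          · have : x ≤ ts + ε / 2 := le_trans hx.2 (min_le_left _ _)
            linarith
        set h : ℝ → ℝ := fun t => ρN * N t / (N t + W t) - αN - βN * (N t + W t) with hhdef
        have hhc : ContinuousOn h U := by
          apply ContinuousOn.sub
          apply ContinuousOn.sub
          · exact ContinuousOn.div ((continuous_const.mul hNc).continuousOn)
              ((hNc.add hWc).continuousOn) (fun x hx => ne_of_gt hx)
          · exact continuousOn_const
          · exact (continuous_const.mul (hNc.add hWc)).continuousOn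
        have hNode : ∀ t ∈ U, HasDerivAt N (h t * N t) t := by
          intro t _
          convert hNd t using 1
          simp only [hhdef]
          ring
        have := local_lin_zero N h ts b htsb.le U hUopen hIccU hhc hNode htsN0
        have hbneg : N b < 0 := hafter b ⟨htsb, hbt1⟩
        linarith
    -- decay
    have hSnn : ∀ t, 0 ≤ t → 0 ≤ N t + W t := fun t ht =>
      add_nonneg (hNnn t ht) (hWnn t)
    have hNtend : Filter.Tendsto N Filter.atTop (nhds 0) := by
      apply decay_aux N (fun t => ρN * (N t)^2 / (N t + W t) - αN * N t
        - βN * N t * (N t + W t)) (αN - ρN) (by linarith) hNd _ hNnn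
      intro t ht
      have hN := hNnn t ht
      have hW := hWnn t
      have hdivle : ρN * (N t)^2 / (N t + W t) ≤ ρN * N t := by
        rcases eq_or_lt_of_le (hSnn t ht) with hS | hS
        · have hNz : N t = 0 := by linarith
          simp [hNz, ← hS]
        · rw [div_le_iff₀ hS]
          nlinarith [mul_nonneg (mul_nonneg hρN.le hN) hW]
      nlinarith [mul_nonneg (mul_nonneg hβN.le hN) (hSnn t ht)]
    have hWtend : Filter.Tendsto W Filter.atTop (nhds 0) := by
      apply decay_aux W (fun t => ρW * W t - αW * W t - βW * W t * (N t + W t))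
        (αW - ρW) (by linarith) hWd _ (fun t _ => hWnn t)
      intro t ht
      nlinarith [mul_nonneg (mul_nonneg hβW.le (hWnn t)) (hSnn t ht)]
    have := hNtend.prodMk_nhds hWtend
    simpa using this
end

section
/- The coexistence equilibrium of the Wolbachia system requires N♯ > W♯: if there exists an equilibrium (N,W) with N > 0 and W > 0, then (ρ_N − α_N)/β_N > (ρ_W − α_W)/β_W, assuming ρ_N > α_N and ρ_W > α_W. -/
/-!
On a coexistence equilibrium the `W`-equation, divided by `W`, pins the total population:
`N + W = W♯`. The `N`-equation, divided by `N`, reads `ρ_N N/(N+W) = α_N + β_N (N+W)`; since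
`N/(N+W) < 1`, this forces `α_N + β_N (N+W) < ρ_N`, i.e. `N + W < N♯`.
-/

lemma add_eq_div_of_logistic_equilibrium {ρ α β N W : ℝ} (hβ : 0 < β) (hW : W ≠ 0)
    (hG : ρ * W - α * W - β * W * (N + W) = 0) :
    N + W = (ρ - α) / β := by
  have hfactor : W * (ρ - α - β * (N + W)) = 0 := by linear_combination hG
  have hrate : ρ - α - β * (N + W) = 0 := (mul_eq_zero.mp hfactor).resolve_left hW
  rw [eq_div_iff hβ.ne']
  linarith

lemma add_lt_div_of_frequency_dependent_equilibrium {ρ α β N W : ℝ} (hρ : 0 < ρ) (hβ : 0 < β)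
    (hN : 0 < N) (hW : 0 < W)
    (hF : ρ * N ^ 2 / (N + W) - α * N - β * N * (N + W) = 0) :
    N + W < (ρ - α) / β := by
  have hS : 0 < N + W := by linarith
  have hrate : ρ - α - β * (N + W) = ρ * W / (N + W) := by
    have hF' : N * (ρ - α - β * (N + W) - ρ * W / (N + W)) = 0 := by
      rw [← hF]
      field_simp
      ring
    linarith [(mul_eq_zero.mp hF').resolve_left hN.ne']
  have hpos : 0 < ρ * W / (N + W) := by positivity
  rw [lt_div_iff₀ hβ]
  linarith

theorem stmt_17_general (ρN ρW αN αW βN βW : ℝ)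
    (hρN : 0 < ρN)
    (hβN : 0 < βN) (hβW : 0 < βW)
    (h : ∃ N W : ℝ, 0 < N ∧ 0 < W ∧
      ρN * N^2 / (N + W) - αN * N - βN * N * (N + W) = 0 ∧
      ρW * W - αW * W - βW * W * (N + W) = 0) :
    (ρW - αW) / βW < (ρN - αN) / βN := by
  obtain ⟨N, W, hN, hW, hF, hG⟩ := h
  rw [← add_eq_div_of_logistic_equilibrium hβW hW.ne' hG]
  exact add_lt_div_of_frequency_dependent_equilibrium hρN hβN hN hW hF

theorem stmt_17 (ρN ρW αN αW βN βW : ℝ)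
    (hρN : 0 < ρN) (hρW : 0 < ρW) (hαN : 0 < αN) (hαW : 0 < αW)
    (hβN : 0 < βN) (hβW : 0 < βW)
    (hsN : αN < ρN) (hsW : αW < ρW)
    (h : ∃ N W : ℝ, 0 < N ∧ 0 < W ∧
      ρN * N^2 / (N + W) - αN * N - βN * N * (N + W) = 0 ∧
      ρW * W - αW * W - βW * W * (N + W) = 0) :
    (ρW - αW) / βW < (ρN - αN) / βN :=
  stmt_17_general ρN ρW αN αW βN βW hρN hβN hβW h
end
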